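/- In the setting where ((ζ_i, γ_i))_{i≥1} is an i.i.d. sequence with values almost surely in [0, ζ̄] × [γ̲, γ̄] (0 ≤ ζ̄ < 1, 1 < γ̲ ≤ γ̄ < ∞), let Z be the almost-sure limit of R_k/L_k, where (L_k, R_k) := (1,1)·M(ζ_{k−1},γ_{k−1})⋯M(ζ_1,γ_1). If (ζ, γ) is a random pair with the same distribution as (ζ_1, γ_1) and independent of Z (on a possibly enlarged probability space), then Φ_{(ζ,γ)}(Z) has the same distribution as Z. Moreover, this distributional fixed-point property determines the law of Z uniquely: any [0,1]-valued random variable Z′ that is independent of a pair (ζ′, γ′) distributed as (ζ_1, γ_1) and satisfies that Φ_{(ζ′,γ′)}(Z′) has the same distribution as Z′ must have the same distribution as Z. -/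

import Mathlib

open Matrix Filter MeasureTheory ProbabilityTheory

/-- The transfer matrix `M(ζ,γ) = (1/((1+ζ)γ)) · [[γ², ζγ²],[ζ, 1]]`. -/
noncomputable def Mmat (ζ γ : ℝ) : Matrix (Fin 2) (Fin 2) ℝ :=
  (((1 + ζ) * γ)⁻¹) • !![γ ^ 2, ζ * γ ^ 2; ζ, 1]

/-- The backward product `M_{k-1} · M_{k-2} ⋯ M_1`. -/
noncomputable def backwardProd (ζ γ : ℕ → ℝ) (k : ℕ) : Matrix (Fin 2) (Fin 2) ℝ :=
  ((List.range (k - 1)).map (fun i => Mmat (ζ (k - 1 - i)) (γ (k - 1 - i)))).prod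

/-- `L_k` : first entry of `(1,1) · M_{k-1} ⋯ M_1`. -/
noncomputable def Lback (ζ γ : ℕ → ℝ) (k : ℕ) : ℝ :=
  Matrix.vecMul ![1, 1] (backwardProd ζ γ k) 0

/-- `R_k` : second entry of `(1,1) · M_{k-1} ⋯ M_1`. -/
noncomputable def Rback (ζ γ : ℕ → ℝ) (k : ℕ) : ℝ :=
  Matrix.vecMul ![1, 1] (backwardProd ζ γ k) 1

/-- The Möbius transform `Φ_{(ζ,γ)}(z) = (ζγ² + z)/(γ² + ζz)`. -/
noncomputable def Phi (ζ γ z : ℝ) : ℝ := (ζ * γ ^ 2 + z) / (γ ^ 2 + ζ * z)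

noncomputable def Pm (a b : ℕ → ℝ) (k : ℕ) : Matrix (Fin 2) (Fin 2) ℝ :=
  ((List.range k).map (fun i => Mmat (a (k - i)) (b (k - i)))).prod

lemma backwardProd_eq_Pm (a b : ℕ → ℝ) (k : ℕ) : backwardProd a b (k+1) = Pm a b k := by
  simp [backwardProd, Pm]

lemma Pm_succ (a b : ℕ → ℝ) (k : ℕ) :
    Pm a b (k+1) = Mmat (a (k+1)) (b (k+1)) * Pm a b k := by
  unfold Pm
  rw [List.range_succ_eq_map, List.map_cons, List.prod_cons, List.map_map]
  congr 1
  congr 1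
  apply congrArg (fun f => List.map f (List.range k))
  funext i
  simp only [Function.comp_apply]
  rw [show k + 1 - (i + 1) = k - i from by omega]

lemma vecMul_Mmat (ζ γ L R : ℝ) :
    vecMul ![L, R] (Mmat ζ γ)
      = ![((1+ζ)*γ)⁻¹ * (L*γ^2 + R*ζ), ((1+ζ)*γ)⁻¹ * (L*(ζ*γ^2) + R)] := by
  funext j
  fin_cases j <;>
    · simp [Mmat, Matrix.vecMul, dotProduct, Fin.sum_univ_two]
      ring



/-- the parameter box -/
def Good (ζbar γlow γbar : ℝ) (p : ℝ × ℝ) : Prop :=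
  p.1 ∈ Set.Icc 0 ζbar ∧ p.2 ∈ Set.Icc γlow γbar

section Det
variable {ζbar γlow γbar : ℝ}

lemma phi_denom_pos (hγlow : 1 < γlow) {p : ℝ × ℝ} (hp : Good ζbar γlow γbar p)
    {z : ℝ} (hz : 0 ≤ z) : 0 < p.2 ^ 2 + p.1 * z := by
  have h1 : (1:ℝ) < p.2 := lt_of_lt_of_le hγlow hp.2.1
  nlinarith [hp.1.1]

lemma phi_mem (hζbar1 : ζbar < 1) (hγlow : 1 < γlow) {p : ℝ × ℝ}
    (hp : Good ζbar γlow γbar p) {z : ℝ}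
    (hz : z ∈ Set.Icc (0:ℝ) 1) : Phi p.1 p.2 z ∈ Set.Icc (0:ℝ) 1 := by
  have h1 : (1:ℝ) < p.2 := lt_of_lt_of_le hγlow hp.2.1
  have hd := phi_denom_pos hγlow hp hz.1
  unfold Phi
  constructor
  · exact div_nonneg (by nlinarith [hp.1.1, hz.1]) hd.le
  · rw [div_le_one hd]
    have hζ1 : p.1 ≤ 1 := le_of_lt (lt_of_le_of_lt hp.1.2 hζbar1)
    have hzγ : z ≤ p.2 ^ 2 := by nlinarith [hz.2]
    nlinarith [mul_nonneg (sub_nonneg.2 hζ1) (sub_nonneg.2 hzγ)]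

lemma phi_lip (hζbar1 : ζbar < 1) (hγlow : 1 < γlow) {p : ℝ × ℝ}
    (hp : Good ζbar γlow γbar p) {z w : ℝ} (hz : 0 ≤ z) (hw : 0 ≤ w) :
    |Phi p.1 p.2 z - Phi p.1 p.2 w| ≤ (γlow ^ 2)⁻¹ * |z - w| := by
  have h1 : (1:ℝ) < p.2 := lt_of_lt_of_le hγlow hp.2.1
  have hγ0 : (0:ℝ) < γlow := lt_trans one_pos hγlow
  have hd1 := phi_denom_pos hγlow hp hz
  have hd2 := phi_denom_pos hγlow hp hw
  have key : Phi p.1 p.2 z - Phi p.1 p.2 w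
      = (z - w) * (p.2 ^ 2 * (1 - p.1 ^ 2)) / ((p.2 ^ 2 + p.1 * z) * (p.2 ^ 2 + p.1 * w)) := by
    unfold Phi; field_simp; ring
  have hζ1 : p.1 < 1 := lt_of_le_of_lt hp.1.2 hζbar1
  have hsq : p.1 ^ 2 ≤ 1 := by nlinarith [hp.1.1]
  have hnum : 0 ≤ p.2 ^ 2 * (1 - p.1 ^ 2) := by nlinarith [sq_nonneg p.2]
  rw [key, abs_div, abs_mul, abs_of_nonneg hnum, abs_of_pos (mul_pos hd1 hd2)]
  rw [div_le_iff₀ (mul_pos hd1 hd2)]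
  have h2 : γlow ^ 2 * (p.2 ^ 2 * (1 - p.1 ^ 2)) ≤ (p.2 ^ 2 + p.1 * z) * (p.2 ^ 2 + p.1 * w) := by
    have hg : γlow ^ 2 ≤ p.2 ^ 2 := by nlinarith [hp.2.1]
    have t1 : γlow ^ 2 * (1 - p.1 ^ 2) ≤ p.2 ^ 2 := by
      nlinarith [mul_nonneg (sq_nonneg γlow) (sq_nonneg p.1)]
    nlinarith [t1, sq_nonneg p.2, mul_nonneg hp.1.1 hz, mul_nonneg hp.1.1 hw,
      mul_nonneg (mul_nonneg hp.1.1 hz) (mul_nonneg hp.1.1 hw)]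
  have hb : p.2 ^ 2 * (1 - p.1 ^ 2)
      ≤ (γlow ^ 2)⁻¹ * ((p.2 ^ 2 + p.1 * z) * (p.2 ^ 2 + p.1 * w)) := by
    calc p.2 ^ 2 * (1 - p.1 ^ 2)
        = (γlow ^ 2)⁻¹ * (γlow ^ 2 * (p.2 ^ 2 * (1 - p.1 ^ 2))) := by
          field_simp
      _ ≤ (γlow ^ 2)⁻¹ * ((p.2 ^ 2 + p.1 * z) * (p.2 ^ 2 + p.1 * w)) :=
          mul_le_mul_of_nonneg_left h2 (by positivity)
  calc |z - w| * (p.2 ^ 2 * (1 - p.1 ^ 2))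
      ≤ |z - w| * ((γlow ^ 2)⁻¹ * ((p.2 ^ 2 + p.1 * z) * (p.2 ^ 2 + p.1 * w))) :=
        mul_le_mul_of_nonneg_left hb (abs_nonneg _)
    _ = (γlow ^ 2)⁻¹ * |z - w| * ((p.2 ^ 2 + p.1 * z) * (p.2 ^ 2 + p.1 * w)) := by ring

/-- iterated Möbius maps driven by a finite vector of parameters -/
noncomputable def iterVec : (k : ℕ) → (Fin k → ℝ × ℝ) → ℝ → ℝ
  | 0, _, z => z
  | (k+1), v, z => Phi (v 0).1 (v 0).2 (iterVec k (fun i => v i.succ) z)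

lemma iterVec_succ_right (k : ℕ) (v : Fin (k+1) → ℝ × ℝ) (z : ℝ) :
    iterVec (k+1) v z
      = iterVec k (fun i => v i.castSucc)
          (Phi (v (Fin.last k)).1 (v (Fin.last k)).2 z) := by
  induction k with
  | zero => rfl
  | succ k ih =>
      show Phi (v 0).1 (v 0).2 (iterVec (k+1) (fun i => v i.succ) z) = _
      rw [ih (fun i => v i.succ)]
      simp only [iterVec, Fin.castSucc_zero, Fin.succ_castSucc, Fin.succ_last]

lemma iterVec_mem (hζbar1 : ζbar < 1) (hγlow : 1 < γlow) {k : ℕ} {v : Fin k → ℝ × ℝ}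
    (hv : ∀ i, Good ζbar γlow γbar (v i))
    {z : ℝ} (hz : z ∈ Set.Icc (0:ℝ) 1) : iterVec k v z ∈ Set.Icc (0:ℝ) 1 := by
  induction k with
  | zero => exact hz
  | succ k ih => exact phi_mem hζbar1 hγlow (hv 0) (ih (fun i => hv i.succ))

lemma iterVec_contract (hζbar1 : ζbar < 1) (hγlow : 1 < γlow) {k : ℕ} {v : Fin k → ℝ × ℝ}
    (hv : ∀ i, Good ζbar γlow γbar (v i))
    {z w : ℝ} (hz : z ∈ Set.Icc (0:ℝ) 1) (hw : w ∈ Set.Icc (0:ℝ) 1) :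
    |iterVec k v z - iterVec k v w| ≤ ((γlow ^ 2)⁻¹) ^ k * |z - w| := by
  have hγ0 : (0:ℝ) < γlow := lt_trans one_pos hγlow
  induction k with
  | zero => simp [iterVec]
  | succ k ih =>
      have hz' := iterVec_mem hζbar1 hγlow (fun i => hv i.succ) hz
      have hw' := iterVec_mem hζbar1 hγlow (fun i => hv i.succ) hw
      calc |iterVec (k+1) v z - iterVec (k+1) v w|
          ≤ (γlow ^ 2)⁻¹ * |iterVec k (fun i => v i.succ) z - iterVec k (fun i => v i.succ) w| :=
            phi_lip hζbar1 hγlow (hv 0) hz'.1 hw'.1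
        _ ≤ (γlow ^ 2)⁻¹ * (((γlow ^ 2)⁻¹) ^ k * |z - w|) :=
            mul_le_mul_of_nonneg_left (ih (fun i => hv i.succ)) (by positivity)
        _ = ((γlow ^ 2)⁻¹) ^ (k+1) * |z - w| := by ring

lemma measurable_phiU : Measurable (fun q : (ℝ × ℝ) × ℝ => Phi q.1.1 q.1.2 q.2) := by
  unfold Phi
  have h1 : Measurable (fun q : (ℝ × ℝ) × ℝ => q.1.1) := measurable_fst.fst
  have h2 : Measurable (fun q : (ℝ × ℝ) × ℝ => q.1.2) := measurable_fst.snd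
  exact ((h1.mul (h2.pow measurable_const)).add measurable_snd).div
    ((h2.pow measurable_const).add (h1.mul measurable_snd))

lemma measurable_iterVec (k : ℕ) :
    Measurable (fun q : (Fin k → ℝ × ℝ) × ℝ => iterVec k q.1 q.2) := by
  induction k with
  | zero => exact measurable_snd
  | succ k ih =>
      show Measurable fun q : (Fin (k+1) → ℝ × ℝ) × ℝ =>
        Phi (q.1 0).1 (q.1 0).2 (iterVec k (fun i => q.1 i.succ) q.2)
      have h0 : Measurable (fun q : (Fin (k+1) → ℝ × ℝ) × ℝ => q.1 0) :=
        (measurable_pi_apply 0).comp measurable_fst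
      have hm : Measurable (fun q : (Fin (k+1) → ℝ × ℝ) × ℝ =>
          ((fun i => q.1 i.succ, q.2) : (Fin k → ℝ × ℝ) × ℝ)) :=
        Measurable.prodMk
          (measurable_pi_lambda _ fun i => (measurable_pi_apply i.succ).comp measurable_fst)
          measurable_snd
      have h1 : Measurable (fun q : (Fin (k+1) → ℝ × ℝ) × ℝ =>
          iterVec k (fun i => q.1 i.succ) q.2) := ih.comp hm
      exact measurable_phiU.comp ((h0.prodMk h1))

end Det

lemma ratio_aux (a b : ℕ → ℝ) (hab : ∀ i, 1 ≤ i → 0 ≤ a i ∧ 0 < b i) :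
    ∀ (k : ℕ) (L R : ℝ), 0 < L → 0 < R →
      0 < vecMul ![L, R] (Pm a b k) 0 ∧
      vecMul ![L, R] (Pm a b k) 1 / vecMul ![L, R] (Pm a b k) 0
        = iterVec k (fun i : Fin k => (a (i + 1), b (i + 1))) (R / L) := by
  intro k
  induction k with
  | zero =>
      intro L R hL hR
      simp [Pm, iterVec]
      exact hL
  | succ k ih =>
      intro L R hL hR
      have hζ : 0 ≤ a (k+1) := (hab (k+1) (by omega)).1
      have hγ : 0 < b (k+1) := (hab (k+1) (by omega)).2
      set ζ := a (k+1); set γ := b (k+1)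
      have hc : 0 < ((1+ζ)*γ)⁻¹ := by positivity
      set L' := ((1+ζ)*γ)⁻¹ * (L*γ^2 + R*ζ) with hL'def
      set R' := ((1+ζ)*γ)⁻¹ * (L*(ζ*γ^2) + R) with hR'def
      have hL' : 0 < L' := by positivity
      have hR' : 0 < R' := by positivity
      have hrw : vecMul ![L, R] (Pm a b (k+1)) = vecMul ![L', R'] (Pm a b k) := by
        rw [Pm_succ, ← Matrix.vecMul_vecMul, vecMul_Mmat]
      have hratio : R' / L' = Phi ζ γ (R / L) := by
        have h1 : R' / L' = (L*(ζ*γ^2) + R) / (L*γ^2 + R*ζ) := by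
          rw [hL'def, hR'def, mul_div_mul_left _ _ (ne_of_gt hc)]
        rw [h1, Phi]
        have hd : 0 < γ^2 + ζ * (R/L) := by positivity
        rw [div_eq_div_iff (by positivity) (ne_of_gt hd)]
        field_simp
      obtain ⟨h0, hr⟩ := ih L' R' hL' hR'
      refine ⟨by rw [hrw]; exact h0, ?_⟩
      rw [hrw, hr, hratio]
      rw [iterVec_succ_right]
      have e1 : (fun i : Fin k =>
          (fun j : Fin (k+1) => (a (j + 1), b (j + 1))) i.castSucc)
          = fun i : Fin k => (a (i + 1), b (i + 1)) := by
        funext i; simp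
      rw [e1]
      simp [Fin.val_last]
      rfl





lemma ratio_eq (a b : ℕ → ℝ) (hab : ∀ i, 1 ≤ i → 0 ≤ a i ∧ 0 < b i) (k : ℕ) :
    Rback a b (k+1) / Lback a b (k+1)
      = iterVec k (fun i : Fin k => (a (i + 1), b (i + 1))) 1 := by
  obtain ⟨h0, hr⟩ := ratio_aux a b hab k 1 1 one_pos one_pos
  unfold Rback Lback
  rw [backwardProd_eq_Pm, hr]
  norm_num

noncomputable def PhiU : (ℝ × ℝ) × ℝ → ℝ := fun q => Phi q.1.1 q.1.2 q.2

lemma measurable_PhiU : Measurable PhiU := measurable_phiU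

section MeasureLemmas
variable (ν : Measure (ℝ × ℝ)) [IsProbabilityMeasure ν]

lemma pi_succ_map (k : ℕ) :
    (Measure.pi fun _ : Fin (k+1) => ν).map
        (fun v : Fin (k+1) → ℝ × ℝ => (v 0, fun i : Fin k => v i.succ))
      = ν.prod (Measure.pi fun _ : Fin k => ν) := by
  have h := measurePreserving_piFinSuccAbove (fun _ : Fin (k+1) => ν) 0
  have he : (fun v : Fin (k+1) → ℝ × ℝ => (v 0, fun i : Fin k => v i.succ))
      = ⇑(MeasurableEquiv.piFinSuccAbove (fun _ : Fin (k+1) => ℝ × ℝ) 0) := by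
    funext v
    simp [MeasurableEquiv.piFinSuccAbove, Fin.zero_succAbove]
    rfl
  rw [he, h.map_eq]

lemma pi_map_G_succ (k : ℕ) :
    (Measure.pi fun _ : Fin (k+1) => ν).map (fun v => iterVec (k+1) v 1)
      = (ν.prod ((Measure.pi fun _ : Fin k => ν).map (fun v => iterVec k v 1))).map PhiU := by
  have hG : ∀ m, Measurable (fun v : Fin m → ℝ × ℝ => iterVec m v 1) := fun m =>
    (measurable_iterVec m).comp (measurable_id.prodMk measurable_const)
  have he : Measurable (fun v : Fin (k+1) → ℝ × ℝ => (v 0, fun i : Fin k => v i.succ)) :=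
    (measurable_pi_apply 0).prodMk
      (measurable_pi_lambda _ fun i => measurable_pi_apply i.succ)
  have hcomp : (fun v : Fin (k+1) → ℝ × ℝ => iterVec (k+1) v 1)
      = PhiU ∘ (Prod.map id (fun v : Fin k → ℝ × ℝ => iterVec k v 1))
          ∘ (fun v : Fin (k+1) → ℝ × ℝ => (v 0, fun i : Fin k => v i.succ)) := rfl
  rw [hcomp, ← Function.comp_assoc]
  rw [← Measure.map_map (measurable_PhiU.comp ((measurable_id.prodMap (hG k)))) he]
  rw [pi_succ_map]
  rw [← Measure.map_map measurable_PhiU (measurable_id.prodMap (hG k))]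
  congr 1
  rw [← Measure.map_prod_map _ _ measurable_id (hG k), Measure.map_id]

lemma law_iter_fixed (κ : Measure ℝ) [IsProbabilityMeasure κ]
    (hκ : (ν.prod κ).map PhiU = κ) (k : ℕ) :
    ((Measure.pi fun _ : Fin k => ν).prod κ).map
        (fun q : (Fin k → ℝ × ℝ) × ℝ => iterVec k q.1 q.2) = κ := by
  induction k with
  | zero =>
      have h : (fun q : (Fin 0 → ℝ × ℝ) × ℝ => iterVec 0 q.1 q.2) = Prod.snd := rfl
      rw [h, Measure.map_snd_prod, measure_univ, one_smul]
  | succ k ih =>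
      have hG : Measurable (fun q : (Fin k → ℝ × ℝ) × ℝ => iterVec k q.1 q.2) :=
        measurable_iterVec k
      have he : Measurable (fun v : Fin (k+1) → ℝ × ℝ => (v 0, fun i : Fin k => v i.succ)) :=
        (measurable_pi_apply 0).prodMk
          (measurable_pi_lambda _ fun i => measurable_pi_apply i.succ)
      have hT : Measurable (fun q : (Fin (k+1) → ℝ × ℝ) × ℝ =>
          ((q.1 0, ((fun i : Fin k => q.1 i.succ), q.2)) : (ℝ × ℝ) × ((Fin k → ℝ × ℝ) × ℝ))) :=
        ((measurable_pi_apply 0).comp measurable_fst).prodMk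
          ((measurable_pi_lambda _ fun i =>
            ((measurable_pi_apply i.succ).comp measurable_fst)).prodMk measurable_snd)
      have hstep : ((Measure.pi fun _ : Fin (k+1) => ν).prod κ).map
          (fun q : (Fin (k+1) → ℝ × ℝ) × ℝ =>
            ((q.1 0, ((fun i : Fin k => q.1 i.succ), q.2)) : (ℝ × ℝ) × ((Fin k → ℝ × ℝ) × ℝ)))
          = ν.prod ((Measure.pi fun _ : Fin k => ν).prod κ) := by
        have hc : (fun q : (Fin (k+1) → ℝ × ℝ) × ℝ =>
            ((q.1 0, ((fun i : Fin k => q.1 i.succ), q.2)) : (ℝ × ℝ) × ((Fin k → ℝ × ℝ) × ℝ)))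
            = ⇑(MeasurableEquiv.prodAssoc)
              ∘ (Prod.map (fun v : Fin (k+1) → ℝ × ℝ => (v 0, fun i : Fin k => v i.succ)) id) :=
          rfl
        rw [hc, ← Measure.map_map MeasurableEquiv.prodAssoc.measurable (he.prodMap measurable_id)]
        rw [← Measure.map_prod_map _ _ he measurable_id, Measure.map_id, pi_succ_map]
        exact (measurePreserving_prodAssoc ν (Measure.pi fun _ : Fin k => ν) κ).map_eq
      have hcomp : (fun q : (Fin (k+1) → ℝ × ℝ) × ℝ => iterVec (k+1) q.1 q.2)
          = PhiU ∘ (Prod.map id (fun q : (Fin k → ℝ × ℝ) × ℝ => iterVec k q.1 q.2))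
            ∘ (fun q : (Fin (k+1) → ℝ × ℝ) × ℝ =>
              ((q.1 0, ((fun i : Fin k => q.1 i.succ), q.2)) : (ℝ × ℝ) × ((Fin k → ℝ × ℝ) × ℝ))) :=
        rfl
      rw [hcomp, ← Function.comp_assoc,
        ← Measure.map_map (measurable_PhiU.comp (measurable_id.prodMap hG)) hT,
        hstep, ← Measure.map_map measurable_PhiU (measurable_id.prodMap hG),
        ← Measure.map_prod_map _ _ measurable_id hG, Measure.map_id, ih, hκ]

end MeasureLemmas

lemma ext_bcf {κ₁ κ₂ : Measure ℝ} [IsFiniteMeasure κ₁] [IsFiniteMeasure κ₂]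
    (h : ∀ φ : BoundedContinuousFunction ℝ ℝ, ∫ x, φ x ∂κ₁ = ∫ x, φ x ∂κ₂) : κ₁ = κ₂ := by
  apply MeasureTheory.ext_of_forall_lintegral_eq_of_IsFiniteMeasure
  intro f
  have hfin1 := BoundedContinuousFunction.lintegral_lt_top_of_nnreal κ₁ f
  have hfin2 := BoundedContinuousFunction.lintegral_lt_top_of_nnreal κ₂ f
  rw [← ENNReal.toReal_eq_toReal_iff' hfin1.ne hfin2.ne,
    BoundedContinuousFunction.toReal_lintegral_coe_eq_integral,
    BoundedContinuousFunction.toReal_lintegral_coe_eq_integral]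
  exact h (BoundedContinuousFunction.comp _ isometry_subtype_coe.lipschitz f)

/-- Let `((ζ_i, γ_i))_{i≥1}` be i.i.d. with values a.s. in `[0, ζ̄] × [γ̲, γ̄]`
(`0 ≤ ζ̄ < 1 < γ̲ ≤ γ̄`), and let `Z` be the a.s. limit of `R_k/L_k` where
`(L_k, R_k) = (1,1)·M(ζ_{k−1},γ_{k−1})⋯M(ζ_1,γ_1)`.  Then:
(1) for any pair `(ζ', γ')` distributed like `(ζ_1, γ_1)` and independent of a copy `Z'` of `Z`
(on a possibly different probability space), `Φ_{(ζ',γ')}(Z')` has the same law as `Z`;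
(2) this distributional fixed-point property determines the law of `Z` uniquely among
`[0,1]`-valued random variables. -/
theorem stmt4 {Ω : Type*} [MeasurableSpace Ω] (μ : Measure Ω) [IsProbabilityMeasure μ]
    (ζ γ : ℕ → Ω → ℝ) (ζbar γlow γbar : ℝ)
    (hζbar0 : 0 ≤ ζbar) (hζbar1 : ζbar < 1) (hγlow : 1 < γlow) (hγord : γlow ≤ γbar)
    (hmeas : ∀ i, Measurable (fun ω => (ζ i ω, γ i ω)))
    (hindep : iIndepFun
      (fun i ω => (ζ (i + 1) ω, γ (i + 1) ω)) μ)
    (hident : ∀ i j, 1 ≤ i → 1 ≤ j →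
      Measure.map (fun ω => (ζ i ω, γ i ω)) μ = Measure.map (fun ω => (ζ j ω, γ j ω)) μ)
    (hbdd : ∀ i, 1 ≤ i → ∀ᵐ ω ∂μ,
      ζ i ω ∈ Set.Icc 0 ζbar ∧ γ i ω ∈ Set.Icc γlow γbar)
    (Z : Ω → ℝ) (hZmeas : Measurable Z)
    (hZ : ∀ᵐ ω ∂μ, Tendsto (fun k => Rback (fun i => ζ i ω) (fun i => γ i ω) k /
        Lback (fun i => ζ i ω) (fun i => γ i ω) k) atTop (nhds (Z ω))) :
    -- (1) the law of `Z` is a fixed point of the random Möbius iteration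
    (∀ (Ω₁ : Type*) (_ : MeasurableSpace Ω₁) (μ₁ : Measure Ω₁), IsProbabilityMeasure μ₁ →
      ∀ (Z₁ ζ₁ γ₁ : Ω₁ → ℝ), Measurable Z₁ → Measurable (fun ω => (ζ₁ ω, γ₁ ω)) →
        Measure.map Z₁ μ₁ = Measure.map Z μ →
        Measure.map (fun ω => (ζ₁ ω, γ₁ ω)) μ₁ = Measure.map (fun ω => (ζ 1 ω, γ 1 ω)) μ →
        IndepFun (fun ω => (ζ₁ ω, γ₁ ω)) Z₁ μ₁ →
        Measure.map (fun ω => Phi (ζ₁ ω) (γ₁ ω) (Z₁ ω)) μ₁ = Measure.map Z μ) ∧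
    -- (2) uniqueness of the distributional fixed point among `[0,1]`-valued variables
    (∀ (Ω₂ : Type*) (_ : MeasurableSpace Ω₂) (μ₂ : Measure Ω₂), IsProbabilityMeasure μ₂ →
      ∀ (Z₂ ζ₂ γ₂ : Ω₂ → ℝ), Measurable Z₂ → Measurable (fun ω => (ζ₂ ω, γ₂ ω)) →
        (∀ᵐ ω ∂μ₂, Z₂ ω ∈ Set.Icc (0 : ℝ) 1) →
        Measure.map (fun ω => (ζ₂ ω, γ₂ ω)) μ₂ = Measure.map (fun ω => (ζ 1 ω, γ 1 ω)) μ →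
        IndepFun (fun ω => (ζ₂ ω, γ₂ ω)) Z₂ μ₂ →
        Measure.map (fun ω => Phi (ζ₂ ω) (γ₂ ω) (Z₂ ω)) μ₂ = Measure.map Z₂ μ₂ →
        Measure.map Z₂ μ₂ = Measure.map Z μ) := by
  -- basic setup
  set ν : Measure (ℝ × ℝ) := Measure.map (fun ω => (ζ 1 ω, γ 1 ω)) μ with hν
  haveI : IsProbabilityMeasure ν := Measure.isProbabilityMeasure_map (hmeas 1).aemeasurable
  haveI : IsProbabilityMeasure (Measure.map Z μ) := Measure.isProbabilityMeasure_map hZmeas.aemeasurable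
  set c : ℝ := (γlow ^ 2)⁻¹ with hc
  have hγ0 : (0:ℝ) < γlow := lt_trans one_pos hγlow
  have hc0 : 0 ≤ c := by positivity
  have hc1 : c < 1 := by
    rw [hc]
    rw [inv_lt_one_iff₀]
    right; nlinarith
  -- the random vectors and iterates
  set vec : (k : ℕ) → Ω → (Fin k → ℝ × ℝ) :=
    fun k ω i => (ζ (i + 1) ω, γ (i + 1) ω) with hvec
  have hvecmeas : ∀ k, Measurable (vec k) := fun k =>
    measurable_pi_lambda _ fun i => hmeas _
  set f : ℕ → Ω → ℝ := fun k ω => iterVec k (vec k ω) 1 with hf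
  have hfmeas : ∀ k, Measurable (f k) := fun k =>
    (measurable_iterVec k).comp ((hvecmeas k).prodMk measurable_const)
  -- Step A : the law of vec k is the product measure
  have vecLaw : ∀ k, μ.map (vec k) = Measure.pi (fun _ : Fin k => ν) := by
    intro k
    refine (Measure.pi_eq fun s hs => ?_).symm
    rw [Measure.map_apply (hvecmeas k) (MeasurableSet.univ_pi hs)]
    classical
    set S : ℕ → Set (ℝ × ℝ) := fun j => if h : j < k then s ⟨j, h⟩ else Set.univ with hS
    have hSmeas : ∀ j, MeasurableSet (S j) := by
      intro j; rw [hS]; dsimp only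
      split
      · exact hs _
      · exact MeasurableSet.univ
    have hpre : vec k ⁻¹' (Set.pi Set.univ s)
        = ⋂ j ∈ Finset.range k, (fun ω => (ζ (j + 1) ω, γ (j + 1) ω)) ⁻¹' (S j) := by
      ext ω
      simp only [Set.mem_preimage, Set.mem_pi, Set.mem_univ, forall_true_left,
        Set.mem_iInter, Finset.mem_range]
      constructor
      · intro h j hj
        rw [hS]; dsimp only; rw [dif_pos hj]
        exact h ⟨j, hj⟩
      · intro h i
        have := h i.1 i.2
        rw [hS] at this; dsimp only at this; rw [dif_pos i.2] at this
        simpa using this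
    rw [hpre, hindep.measure_inter_preimage_eq_mul (Finset.range k) (fun j hj => hSmeas j)]
    have hfac : ∀ j, μ ((fun ω => (ζ (j + 1) ω, γ (j + 1) ω)) ⁻¹' S j) = ν (S j) := by
      intro j
      rw [hν, hident 1 (j+1) le_rfl (by omega), Measure.map_apply (hmeas (j+1)) (hSmeas j)]
    simp only [hfac]
    rw [← Fin.prod_univ_eq_prod_range (fun j => ν (S j)) k]
    apply Finset.prod_congr rfl
    intro i _
    congr 1
    rw [hS]; dsimp only; rw [dif_pos i.2]
  -- Step B : recursion for the law of f k
  have lawf_succ : ∀ k, μ.map (f (k+1)) = (ν.prod (μ.map (f k))).map PhiU := by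
    intro k
    have hG : ∀ m, Measurable (fun v : Fin m → ℝ × ℝ => iterVec m v 1) := fun m =>
      (measurable_iterVec m).comp (measurable_id.prodMk measurable_const)
    have h1 : ∀ m, μ.map (f m) = (Measure.pi fun _ : Fin m => ν).map
        (fun v => iterVec m v 1) := by
      intro m
      rw [← vecLaw m, Measure.map_map (hG m) (hvecmeas m)]
      rfl
    rw [h1 (k+1), h1 k, pi_map_G_succ]
  -- Step C : a.e. facts
  have hgood : ∀ᵐ ω ∂μ, ∀ i, 1 ≤ i → Good ζbar γlow γbar (ζ i ω, γ i ω) := by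
    rw [ae_all_iff]
    intro i
    by_cases hi : 1 ≤ i
    · exact (hbdd i hi).mono fun ω h => fun _ => ⟨h.1, h.2⟩
    · exact Filter.Eventually.of_forall fun ω h' => absurd h' hi
  have hfZ : ∀ᵐ ω ∂μ, Tendsto (fun k => f k ω) atTop (nhds (Z ω)) := by
    filter_upwards [hZ, hgood] with ω h1 h2
    have hab : ∀ i, 1 ≤ i → 0 ≤ ζ i ω ∧ 0 < γ i ω := fun i hi =>
      ⟨(h2 i hi).1.1, lt_of_lt_of_le hγ0 (h2 i hi).2.1⟩
    have he : ∀ k, f k ω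
        = Rback (fun i => ζ i ω) (fun i => γ i ω) (k+1)
          / Lback (fun i => ζ i ω) (fun i => γ i ω) (k+1) := by
      intro k
      rw [ratio_eq (fun i => ζ i ω) (fun i => γ i ω) hab k]
    have h3 : Tendsto (fun k => Rback (fun i => ζ i ω) (fun i => γ i ω) (k+1)
        / Lback (fun i => ζ i ω) (fun i => γ i ω) (k+1)) atTop (nhds (Z ω)) := by
      have := h1.comp (tendsto_add_atTop_nat 1)
      simpa [Function.comp_def] using this
    exact Tendsto.congr (fun k => (he k).symm) h3
  have hfmem : ∀ᵐ ω ∂μ, ∀ k, f k ω ∈ Set.Icc (0:ℝ) 1 := by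
    filter_upwards [hgood] with ω h2 k
    exact iterVec_mem hζbar1 hγlow (fun i => h2 (i + 1) (by omega)) ⟨zero_le_one, le_refl 1⟩
  have hZmem : ∀ᵐ ω ∂μ, Z ω ∈ Set.Icc (0:ℝ) 1 := by
    filter_upwards [hfZ, hfmem] with ω h1 h2
    exact isClosed_Icc.mem_of_tendsto h1 (Filter.Eventually.of_forall h2)
  have hbox : ∀ᵐ p ∂ν, Good ζbar γlow γbar p := by
    rw [hν]
    rw [MeasureTheory.ae_map_iff (hmeas 1).aemeasurable
      (show MeasurableSet {p : ℝ × ℝ | Good ζbar γlow γbar p} from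
        (measurableSet_Icc.prod measurableSet_Icc))]
    exact (hbdd 1 le_rfl).mono fun ω h => ⟨h.1, h.2⟩
  -- Step D : the law of Z is a fixed point (at measure level)
  have hfix : (ν.prod (μ.map Z)).map PhiU = μ.map Z := by
    haveI : IsProbabilityMeasure ((ν.prod (μ.map Z)).map PhiU) :=
      Measure.isProbabilityMeasure_map measurable_PhiU.aemeasurable
    apply ext_bcf
    intro φ
    -- the averaged transform Ψ
    set Ψ : ℝ → ℝ := fun z => ∫ p, φ (Phi p.1 p.2 z) ∂ν with hΨ
    have hΨsm : StronglyMeasurable Ψ := by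
      apply MeasureTheory.StronglyMeasurable.integral_prod_right
        (f := fun (z : ℝ) (p : ℝ × ℝ) => φ (Phi p.1 p.2 z))
      exact (φ.continuous.measurable.comp
        (measurable_PhiU.comp (measurable_snd.prodMk measurable_fst))).stronglyMeasurable
    have hΨbdd : ∀ z, ‖Ψ z‖ ≤ ‖φ‖ := by
      intro z
      have := MeasureTheory.norm_integral_le_of_norm_le_const
        (μ := ν) (C := ‖φ‖) (f := fun p : ℝ × ℝ => φ (Phi p.1 p.2 z))
        (Filter.Eventually.of_forall fun p => φ.norm_coe_le_norm _)
      simpa [measure_univ] using this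
    -- D2 : key identity relating consecutive integrals
    have hD2 : ∀ (θ : Measure ℝ), IsProbabilityMeasure θ →
        ∫ x, φ x ∂((ν.prod θ).map PhiU) = ∫ z, Ψ z ∂θ := by
      intro θ hθ
      haveI := hθ
      rw [MeasureTheory.integral_map measurable_PhiU.aemeasurable
        φ.continuous.aestronglyMeasurable]
      have hint : Integrable (fun q : (ℝ × ℝ) × ℝ => φ (PhiU q)) (ν.prod θ) :=
        (MeasureTheory.integrable_const ‖φ‖).mono'
          ((φ.continuous.measurable.comp measurable_PhiU).aestronglyMeasurable)
          (Filter.Eventually.of_forall fun q => φ.norm_coe_le_norm _)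
      exact MeasureTheory.integral_prod_symm _ hint
    have hD2f : ∀ k, ∫ ω, φ (f (k+1) ω) ∂μ = ∫ ω, Ψ (f k ω) ∂μ := by
      intro k
      have e1 : ∫ ω, φ (f (k+1) ω) ∂μ = ∫ x, φ x ∂(μ.map (f (k+1))) :=
        (MeasureTheory.integral_map (hfmeas (k+1)).aemeasurable
          φ.continuous.aestronglyMeasurable).symm
      have e2 : ∫ z, Ψ z ∂(μ.map (f k)) = ∫ ω, Ψ (f k ω) ∂μ :=
        MeasureTheory.integral_map (hfmeas k).aemeasurable
          hΨsm.aestronglyMeasurable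
      haveI : IsProbabilityMeasure (μ.map (f k)) :=
        Measure.isProbabilityMeasure_map (hfmeas k).aemeasurable
      rw [e1, lawf_succ k, hD2 (μ.map (f k)) inferInstance, e2]
    -- I1 : convergence of ∫ φ (f k)
    have I1 : Tendsto (fun k => ∫ ω, φ (f k ω) ∂μ) atTop (nhds (∫ ω, φ (Z ω) ∂μ)) := by
      apply MeasureTheory.tendsto_integral_of_dominated_convergence (fun _ => ‖φ‖)
      · exact fun k => (φ.continuous.measurable.comp (hfmeas k)).aestronglyMeasurable
      · exact MeasureTheory.integrable_const _
      · exact fun k => Filter.Eventually.of_forall fun ω => φ.norm_coe_le_norm _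
      · exact hfZ.mono fun ω h => (φ.continuous.tendsto _).comp h
    -- I2 : convergence of ∫ Ψ (f k)
    have I2 : Tendsto (fun k => ∫ ω, Ψ (f k ω) ∂μ) atTop (nhds (∫ ω, Ψ (Z ω) ∂μ)) := by
      apply MeasureTheory.tendsto_integral_of_dominated_convergence (fun _ => ‖φ‖)
      · exact fun k => (hΨsm.measurable.comp (hfmeas k)).aestronglyMeasurable
      · exact MeasureTheory.integrable_const _
      · exact fun k => Filter.Eventually.of_forall fun ω => hΨbdd _
      · filter_upwards [hfZ, hZmem] with ω h1 h2
        apply MeasureTheory.tendsto_integral_of_dominated_convergence (fun _ => ‖φ‖)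
        · exact fun k => (φ.continuous.measurable.comp (measurable_PhiU.comp
            (measurable_id.prodMk measurable_const))).aestronglyMeasurable
        · exact MeasureTheory.integrable_const _
        · exact fun k => Filter.Eventually.of_forall fun p => φ.norm_coe_le_norm _
        · filter_upwards [hbox] with p hp
          have hd : 0 < p.2 ^ 2 + p.1 * Z ω := phi_denom_pos hγlow hp h2.1
          have hcont : ContinuousAt (fun z => Phi p.1 p.2 z) (Z ω) := by
            unfold Phi
            exact ContinuousAt.div
              (continuousAt_const.add continuousAt_id)
              (continuousAt_const.add (continuousAt_const.mul continuousAt_id))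
              (ne_of_gt hd)
          exact (φ.continuous.tendsto _).comp (hcont.tendsto.comp h1)
    -- conclude
    have hlim1 : Tendsto (fun k => ∫ ω, φ (f (k+1) ω) ∂μ) atTop (nhds (∫ ω, φ (Z ω) ∂μ)) :=
      I1.comp (tendsto_add_atTop_nat 1)
    have hlim2 : Tendsto (fun k => ∫ ω, φ (f (k+1) ω) ∂μ) atTop (nhds (∫ ω, Ψ (Z ω) ∂μ)) := by
      simpa only [hD2f] using I2
    have hkey : ∫ ω, φ (Z ω) ∂μ = ∫ ω, Ψ (Z ω) ∂μ := tendsto_nhds_unique hlim1 hlim2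
    rw [hD2 (μ.map Z) inferInstance]
    rw [MeasureTheory.integral_map hZmeas.aemeasurable φ.continuous.aestronglyMeasurable,
      MeasureTheory.integral_map hZmeas.aemeasurable hΨsm.aestronglyMeasurable]
    exact hkey.symm
  constructor
  · -- part (1)
    intro Ω₁ m₁ μ₁ hprob₁ Z₁ ζ₁ γ₁ hZ₁meas hpair₁meas hlawZ₁ hlawpair₁ hindep₁
    haveI := hprob₁
    have h1 : μ₁.map (fun ω => ((ζ₁ ω, γ₁ ω), Z₁ ω)) = ν.prod (μ.map Z) := by
      rw [(indepFun_iff_map_prod_eq_prod_map_map hpair₁meas.aemeasurable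
        hZ₁meas.aemeasurable).mp hindep₁, hlawpair₁, hlawZ₁]
    calc μ₁.map (fun ω => Phi (ζ₁ ω) (γ₁ ω) (Z₁ ω))
        = (μ₁.map (fun ω => ((ζ₁ ω, γ₁ ω), Z₁ ω))).map PhiU :=
          (Measure.map_map measurable_PhiU (hpair₁meas.prodMk hZ₁meas)).symm
      _ = (ν.prod (μ.map Z)).map PhiU := by rw [h1]
      _ = μ.map Z := hfix
  · -- part (2)
    intro Ω₂ m₂ μ₂ hprob₂ Z₂ ζ₂ γ₂ hZ₂meas hpair₂meas hZ₂mem hlawpair₂ hindep₂ hfix₂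
    haveI := hprob₂
    set κ : Measure ℝ := μ₂.map Z₂ with hκ
    haveI : IsProbabilityMeasure κ := Measure.isProbabilityMeasure_map hZ₂meas.aemeasurable
    have hκfix : (ν.prod κ).map PhiU = κ := by
      have h1 : μ₂.map (fun ω => ((ζ₂ ω, γ₂ ω), Z₂ ω)) = ν.prod κ := by
        rw [(indepFun_iff_map_prod_eq_prod_map_map hpair₂meas.aemeasurable
          hZ₂meas.aemeasurable).mp hindep₂, hlawpair₂]
      rw [← h1, Measure.map_map measurable_PhiU (hpair₂meas.prodMk hZ₂meas)]
      exact hfix₂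
    -- the coupled iterates on the product space
    set μ' : Measure (Ω × Ω₂) := μ.prod μ₂ with hμ'
    haveI : IsProbabilityMeasure μ' := by rw [hμ']; infer_instance
    set V : ℕ → Ω × Ω₂ → ℝ := fun k p => iterVec k (vec k p.1) (Z₂ p.2) with hV
    have hVmeas : ∀ k, Measurable (V k) := fun k =>
      (measurable_iterVec k).comp
        (((hvecmeas k).comp measurable_fst).prodMk (hZ₂meas.comp measurable_snd))
    have hlawV : ∀ k, μ'.map (V k) = κ := by
      intro k
      have h1 : μ'.map (Prod.map (vec k) Z₂)
          = (Measure.pi fun _ : Fin k => ν).prod κ := by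
        rw [hμ', hκ, ← vecLaw k, Measure.map_prod_map _ _ (hvecmeas k) hZ₂meas]
      calc μ'.map (V k)
          = (μ'.map (Prod.map (vec k) Z₂)).map
              (fun q : (Fin k → ℝ × ℝ) × ℝ => iterVec k q.1 q.2) := by
            rw [Measure.map_map (measurable_iterVec k) ((hvecmeas k).prodMap hZ₂meas)]
            rfl
        _ = ((Measure.pi fun _ : Fin k => ν).prod κ).map
              (fun q : (Fin k → ℝ × ℝ) × ℝ => iterVec k q.1 q.2) := by rw [h1]
        _ = κ := law_iter_fixed ν κ hκfix k
    -- a.e. convergence of V k to Z ∘ fst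
    have hmapfst : μ'.map Prod.fst = μ := by
      rw [hμ', Measure.map_fst_prod, measure_univ, one_smul]
    have hmapsnd : μ'.map Prod.snd = μ₂ := by
      rw [hμ', Measure.map_snd_prod, measure_univ, one_smul]
    have hfst : ∀ᵐ p ∂μ', (∀ i, 1 ≤ i → Good ζbar γlow γbar (ζ i p.1, γ i p.1))
        ∧ Tendsto (fun k => f k p.1) atTop (nhds (Z p.1)) := by
      have h0 : ∀ᵐ ω ∂μ, (∀ i, 1 ≤ i → Good ζbar γlow γbar (ζ i ω, γ i ω))
          ∧ Tendsto (fun k => f k ω) atTop (nhds (Z ω)) := hgood.and hfZ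
      exact MeasureTheory.ae_of_ae_map measurable_fst.aemeasurable (hmapfst ▸ h0)
    have hsnd : ∀ᵐ p ∂μ', Z₂ p.2 ∈ Set.Icc (0:ℝ) 1 :=
      MeasureTheory.ae_of_ae_map measurable_snd.aemeasurable (hmapsnd ▸ hZ₂mem)
    have hconv : ∀ᵐ p ∂μ', Tendsto (fun k => V k p) atTop (nhds (Z p.1)) := by
      filter_upwards [hfst, hsnd] with p hp1 hp2
      have hdiff : ∀ k, ‖V k p - f k p.1‖ ≤ c ^ k := by
        intro k
        have := iterVec_contract hζbar1 hγlow
          (v := vec k p.1) (fun i => hp1.1 (i + 1) (by omega))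
          hp2 ⟨zero_le_one, le_refl 1⟩
        have habs : |Z₂ p.2 - 1| ≤ 1 := abs_le.2 ⟨by linarith [hp2.1], by linarith [hp2.2]⟩
        calc ‖V k p - f k p.1‖ ≤ c ^ k * |Z₂ p.2 - 1| := this
          _ ≤ c ^ k * 1 := by
              apply mul_le_mul_of_nonneg_left habs (by positivity)
          _ = c ^ k := mul_one _
      have htend0 : Tendsto (fun k => V k p - f k p.1) atTop (nhds 0) :=
        squeeze_zero_norm hdiff (tendsto_pow_atTop_nhds_zero_of_lt_one hc0 hc1)
      have := htend0.add hp1.2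
      simpa using this
    -- conclude by weak convergence
    apply ext_bcf
    intro φ
    have J : Tendsto (fun k => ∫ p, φ (V k p) ∂μ') atTop (nhds (∫ p, φ (Z p.1) ∂μ')) := by
      apply MeasureTheory.tendsto_integral_of_dominated_convergence (fun _ => ‖φ‖)
      · exact fun k => (φ.continuous.measurable.comp (hVmeas k)).aestronglyMeasurable
      · exact MeasureTheory.integrable_const _
      · exact fun k => Filter.Eventually.of_forall fun p => φ.norm_coe_le_norm _
      · exact hconv.mono fun p h => (φ.continuous.tendsto _).comp h
    have Jconst : ∀ k, ∫ p, φ (V k p) ∂μ' = ∫ x, φ x ∂κ := by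
      intro k
      rw [← hlawV k, MeasureTheory.integral_map (hVmeas k).aemeasurable
        φ.continuous.aestronglyMeasurable]
    have Jlim : Tendsto (fun k => ∫ p, φ (V k p) ∂μ') atTop (nhds (∫ x, φ x ∂κ)) := by
      simp only [Jconst]
      exact tendsto_const_nhds
    have h1 : ∫ x, φ x ∂κ = ∫ p, φ (Z p.1) ∂μ' := tendsto_nhds_unique Jlim J
    have h2 : ∫ p, φ (Z p.1) ∂μ' = ∫ x, φ x ∂(Measure.map Z μ) := by
      have e1 : ∫ p, φ (Z p.1) ∂μ' = ∫ ω, φ (Z ω) ∂(μ'.map Prod.fst) :=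
        (MeasureTheory.integral_map measurable_fst.aemeasurable
          (φ.continuous.measurable.comp hZmeas).aestronglyMeasurable).symm
      rw [e1, hmapfst,
        MeasureTheory.integral_map hZmeas.aemeasurable φ.continuous.aestronglyMeasurable]
    rw [h1, h2]
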